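/- Let v ≥ 2, c ≥ 1, and ñ ≥ c be integers with c dividing ñ, and set n = vñ. Let H^S = (1_v 1_v^T) ⊗ (−(c/(vñ))B) + I_n, where ⊗ is the Kronecker product. Then H^S has eigenvalue 0 with multiplicity c and eigenvalue 1 with multiplicity n−c; in particular H^S is positive semi-definite, ‖H^S‖ = 1, and for every real n×n matrix K the matrix K^T H^S K is positive semi-definite. -/

import Mathlib

open Matrix Kronecker

/-- The spectral (operator) norm of a real square matrix. -/
noncomputable def specNorm {I : Type*} [Fintype I] [DecidableEq I]
    (A : Matrix I I ℝ) : ℝ :=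
  ‖Matrix.toEuclideanCLM (𝕜 := ℝ) A‖

/-- The `nt × nt` block-diagonal matrix with `c` all-ones diagonal blocks of size `nt/c`. -/
def blockOnes (nt c : ℕ) : Matrix (Fin nt) (Fin nt) ℝ :=
  Matrix.of fun s t => if (s : ℕ) / (nt / c) = (t : ℕ) / (nt / c) then 1 else 0

/-- The `v × v` all-ones matrix. -/
def allOnes (v : ℕ) : Matrix (Fin v) (Fin v) ℝ :=
  Matrix.of fun _ _ => 1

/-!
Write `J` for the all-ones matrix and `m = ñ/c`. Since `J_v² = v J_v` and `B² = m B`, the matrix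
`P = (v m)⁻¹ (J_v ⊗ B)` is an orthogonal projection, of trace `c`, and `H^S = 1 - P`. So `H^S` is an
orthogonal projection of trace `n - c`: its eigenvalues lie in `{0, 1}`, the multiplicity of `1`
is the trace, it is positive semidefinite, and its operator norm is `1` because it is nonzero
(`c < n` as `v ≥ 2`).
-/

open Polynomial Finset

theorem IsStarProjection.norm_eq_one {E : Type*} [NonUnitalNormedRing E] [StarRing E] [CStarRing E]
    {e : E} (he : IsStarProjection e) (h0 : e ≠ 0) : ‖e‖ = 1 := by
  have : ‖e‖ * ‖e‖ = ‖e‖ := by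
    rw [← CStarRing.norm_star_mul_self, he.isSelfAdjoint.star_eq, he.isIdempotentElem.eq]
  exact mul_left_cancel₀ (norm_ne_zero_iff.mpr h0) (this.trans (mul_one _).symm)

namespace Matrix

variable {𝕜 n : Type*} [RCLike 𝕜] [Fintype n] [DecidableEq n] {A : Matrix n n 𝕜}

theorem IsHermitian.rootMultiplicity_charpoly (hA : A.IsHermitian) (x : ℝ) :
    A.charpoly.rootMultiplicity (x : 𝕜) = #{i | hA.eigenvalues i = x} := by
  rw [← count_roots, hA.roots_charpoly_eq_eigenvalues, Multiset.count_map]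
  simp [eq_comm, Finset.card_def]

theorem IsHermitian.eigenvalues_eq_zero_or_one_of_isIdempotentElem (hA : A.IsHermitian)
    (hP : IsIdempotentElem A) (i : n) :
    hA.eigenvalues i = 0 ∨ hA.eigenvalues i = 1 := by
  have := hP.spectrum_subset ℝ
  rw [hA.spectrum_real_eq_range_eigenvalues] at this
  simpa using this (Set.mem_range_self i)

theorem IsHermitian.rootMultiplicity_one_charpoly_of_isIdempotentElem (hA : A.IsHermitian)
    (hP : IsIdempotentElem A) :
    (A.charpoly.rootMultiplicity 1 : 𝕜) = A.trace := by
  have h := hA.rootMultiplicity_charpoly 1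
  rw [RCLike.ofReal_one] at h
  rw [h, hA.trace_eq_sum_eigenvalues, Finset.natCast_card_filter]
  refine Finset.sum_congr rfl fun i _ => ?_
  rcases hA.eigenvalues_eq_zero_or_one_of_isIdempotentElem hP i with h | h <;> simp [h]

theorem IsHermitian.rootMultiplicity_zero_add_one_charpoly_of_isIdempotentElem
    (hA : A.IsHermitian) (hP : IsIdempotentElem A) :
    A.charpoly.rootMultiplicity 0 + A.charpoly.rootMultiplicity 1 = Fintype.card n := by
  have h0 := hA.rootMultiplicity_charpoly 0
  have h1 := hA.rootMultiplicity_charpoly 1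
  rw [RCLike.ofReal_zero] at h0
  rw [RCLike.ofReal_one] at h1
  have hnot : univ.filter (fun i => hA.eigenvalues i ≠ 0) =
      univ.filter (fun i => hA.eigenvalues i = 1) :=
    Finset.filter_congr fun i _ => by
      rcases hA.eigenvalues_eq_zero_or_one_of_isIdempotentElem hP i with h | h <;> simp [h]
  rw [h0, h1, ← hnot, Finset.card_filter_add_card_filter_not, Finset.card_univ]

end Matrix

theorem IsStarProjection.inv_smul_of_mul_self {R : Type*} [Ring R] [StarRing R] [Module ℝ R]
    [StarModule ℝ R] [IsScalarTower ℝ R R] [SMulCommClass ℝ R R] {a : ℝ} {p : R}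
    (hp : IsSelfAdjoint p) (hsq : p * p = a • p) (ha : a ≠ 0) : IsStarProjection (a⁻¹ • p) where
  isIdempotentElem := by
    rw [IsIdempotentElem, smul_mul_smul_comm, hsq, smul_smul, mul_assoc, inv_mul_cancel₀ ha,
      mul_one]
  isSelfAdjoint := (IsSelfAdjoint.all a⁻¹).smul hp

theorem IsStarProjection.specNorm_eq_one {I : Type*} [Fintype I] [DecidableEq I]
    {A : Matrix I I ℝ} (hA : IsStarProjection A) (h0 : A ≠ 0) : specNorm A = 1 :=
  (hA.map (toEuclideanCLM (𝕜 := ℝ))).norm_eq_one (by simpa using h0)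

open scoped ComplexOrder MatrixOrder in
theorem IsStarProjection.posSemidef {𝕜 n : Type*} [RCLike 𝕜] [Fintype n] {A : Matrix n n 𝕜}
    (hA : IsStarProjection A) : A.PosSemidef :=
  hA.nonneg.posSemidef

theorem allOnes_mul_self (v : ℕ) : allOnes v * allOnes v = (v : ℝ) • allOnes v := by
  ext i j
  simp [allOnes, mul_apply]

theorem isSymm_allOnes (v : ℕ) : (allOnes v).IsSymm := by
  ext i j
  rfl

theorem trace_allOnes (v : ℕ) : (allOnes v).trace = v := by
  simp [trace, allOnes]

theorem isSymm_blockOnes (nt c : ℕ) : (blockOnes nt c).IsSymm := by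
  ext i j
  simp [blockOnes, eq_comm]

theorem trace_blockOnes (nt c : ℕ) : (blockOnes nt c).trace = nt := by
  simp [trace, blockOnes]

theorem blockOnes_eq_submatrix {c : ℕ} (hc : 0 < c) (m : ℕ) :
    blockOnes (c * m) c = ((1 : Matrix (Fin c) (Fin c) ℝ) ⊗ₖ allOnes m).submatrix
      finProdFinEquiv.symm finProdFinEquiv.symm := by
  ext s t
  simp [blockOnes, allOnes, one_apply, Nat.mul_div_cancel_left m hc, Fin.ext_iff]

theorem blockOnes_mul_self {c : ℕ} (hc : 0 < c) (m : ℕ) :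
    blockOnes (c * m) c * blockOnes (c * m) c = (m : ℝ) • blockOnes (c * m) c := by
  rw [blockOnes_eq_submatrix hc, submatrix_mul_equiv, ← mul_kronecker_mul, one_mul,
    allOnes_mul_self, kronecker_smul]
  rfl

theorem isStarProjection_allOnes_kronecker_blockOnes {v c m : ℕ} (hv : v ≠ 0) (hc : 0 < c)
    (hm : m ≠ 0) :
    IsStarProjection (((v : ℝ) * m)⁻¹ • (allOnes v ⊗ₖ blockOnes (c * m) c)) := by
  refine .inv_smul_of_mul_self ?_ ?_ (by positivity)
  · refine isHermitian_iff_isSymm.mpr ?_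
    rw [IsSymm, ← kroneckerMap_transpose, (isSymm_allOnes v).eq, (isSymm_blockOnes _ _).eq]
  · rw [← mul_kronecker_mul, allOnes_mul_self, blockOnes_mul_self hc, smul_kronecker,
      kronecker_smul, smul_smul]

theorem trace_inv_smul_allOnes_kronecker_blockOnes {v m : ℕ} (hv : v ≠ 0) (hm : m ≠ 0) (c : ℕ) :
    (((v : ℝ) * m)⁻¹ • (allOnes v ⊗ₖ blockOnes (c * m) c)).trace = c := by
  rw [trace_smul, trace_kronecker, trace_allOnes, trace_blockOnes, smul_eq_mul]
  push_cast
  field_simp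

theorem allOnes_kronecker_neg_smul_blockOnes_add_one {c : ℕ} (hc : c ≠ 0) (v m : ℕ) :
    allOnes v ⊗ₖ (-(((c : ℝ) / ((v : ℝ) * ↑(c * m))) • blockOnes (c * m) c)) + 1 =
      1 - ((v : ℝ) * m)⁻¹ • (allOnes v ⊗ₖ blockOnes (c * m) c) := by
  ext ⟨i, s⟩ ⟨j, t⟩
  simp only [Matrix.add_apply, Matrix.sub_apply, Matrix.smul_apply, kroneckerMap_apply,
    Matrix.neg_apply, allOnes, of_apply]
  push_cast
  field_simp
  ring

/-- `H^S = (1_v 1_vᵀ) ⊗ (−(c/(v·ñ))·B) + I_n` (with `n = v·ñ`) has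
eigenvalue `0` with multiplicity `c` and eigenvalue `1` with multiplicity `n − c`;
in particular `H^S` is positive semi-definite, `‖H^S‖ = 1`, and `Kᵀ H^S K` is positive
semi-definite for every real `n × n` matrix `K`. -/
theorem stmt4 (v c nt : ℕ) (hv : 2 ≤ v) (hc : 1 ≤ c) (hnc : c ≤ nt) (hdvd : c ∣ nt) :
    let HS : Matrix (Fin v × Fin nt) (Fin v × Fin nt) ℝ :=
      allOnes v ⊗ₖ (-(((c : ℝ) / ((v : ℝ) * nt)) • blockOnes nt c)) + 1
    Polynomial.rootMultiplicity 0 HS.charpoly = c ∧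
    Polynomial.rootMultiplicity 1 HS.charpoly = v * nt - c ∧
    HS.PosSemidef ∧
    specNorm HS = 1 ∧
    ∀ K : Matrix (Fin v × Fin nt) (Fin v × Fin nt) ℝ, (Kᵀ * HS * K).PosSemidef := by
  obtain ⟨m, rfl⟩ := hdvd
  have hm : m ≠ 0 := by rintro rfl; omega
  have hN : c < v * (c * m) := by nlinarith [Nat.one_le_iff_ne_zero.mpr hm]
  intro HS
  have hHS : HS = 1 - ((v : ℝ) * m)⁻¹ • (allOnes v ⊗ₖ blockOnes (c * m) c) :=
    allOnes_kronecker_neg_smul_blockOnes_add_one (by omega) v m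
  have hproj : IsStarProjection HS :=
    hHS ▸ (isStarProjection_allOnes_kronecker_blockOnes (by omega) hc hm).one_sub
  have htrace : HS.trace = (v * (c * m) - c : ℕ) := by
    rw [hHS, trace_sub, trace_one, trace_inv_smul_allOnes_kronecker_blockOnes (by omega) hm,
      Nat.cast_sub hN.le]
    simp
  have hH : HS.IsHermitian := hproj.isSelfAdjoint
  have hmult1 : HS.charpoly.rootMultiplicity 1 = v * (c * m) - c := by
    exact_mod_cast (hH.rootMultiplicity_one_charpoly_of_isIdempotentElem
      hproj.isIdempotentElem).trans htrace
  have hmult01 := hH.rootMultiplicity_zero_add_one_charpoly_of_isIdempotentElem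
    hproj.isIdempotentElem
  rw [Fintype.card_prod, Fintype.card_fin, Fintype.card_fin] at hmult01
  refine ⟨by omega, hmult1, hproj.posSemidef, hproj.specNorm_eq_one fun h0 => ?_, fun K => ?_⟩
  · rw [h0, trace_zero, eq_comm, Nat.cast_eq_zero] at htrace
    omega
  · simpa [conjTranspose_eq_transpose_of_trivial] using
      hproj.posSemidef.conjTranspose_mul_mul_same K
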